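/- Let 1 → N → G → Q → 1 be a group extension, i.e., let p : G → Q be a surjective group homomorphism with kernel N. If every finitely generated subgroup of G is finitely presented and N is finitely generated, then every finitely generated subgroup of Q is finitely presented. (This is the case (n,m) = (1,2) of part (ii) of the extension inheritance lemma: if G is coherent and N is of type F₁, then Q is coherent.) -/

import Mathlib

/-
If `K ≤ Q` is finitely generated, its full preimage `H = p⁻¹(K)` is generated by lifts of
generators of `K` together with generators of `N`, so `H` is finitely presented by coherence
of `G`. Now `p` maps `H` onto `K` with kernel `N`, and adding the finitely many generators of `N`
as relators to a finite presentation of `H` gives one of `K`.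
-/

/-- A group is finitely presented if it admits a presentation with finitely many
generators and finitely many relations. -/
def Group.FinitelyPresented (G : Type*) [Group G] : Prop :=
  ∃ (n : ℕ) (rels : Finset (FreeGroup (Fin n))),
    Nonempty (G ≃* PresentedGroup (rels : Set (FreeGroup (Fin n))))

section

variable {G H : Type*} [Group G] [Group H]

theorem Group.finitelyPresented_iff_isFinitelyPresented :
    Group.FinitelyPresented G ↔ Group.IsFinitelyPresented G := by
  constructor
  · rintro ⟨n, rels, ⟨e⟩⟩
    exact Group.IsFinitelyPresented.equiv e.symm
  · intro hG
    obtain ⟨n, s, hs, he⟩ := Group.IsFinitelyPresented.exists_mulEquiv_presentedGroup (G := G)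
    lift s to Finset (FreeGroup (Fin n)) using hs
    exact ⟨n, s, he⟩

theorem Subgroup.FG.comap_of_surjective {K : Subgroup H} (hK : K.FG) {f : G →* H}
    (hf : Function.Surjective f) (hker : f.ker.FG) : (K.comap f).FG := by
  classical
  obtain ⟨S, rfl⟩ := hK
  have hlift : f '' (S.image (Function.surjInv hf) : Set G) = S := by
    simp [Set.image_image, Function.surjInv_eq hf]
  rw [← hlift, ← MonoidHom.map_closure, Subgroup.comap_map_eq]
  exact (show (Subgroup.closure _).FG from ⟨_, rfl⟩).sup hker

theorem Subgroup.FG.subgroupOf_of_le {N K : Subgroup G} (hN : N.FG) (hle : N ≤ K) :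
    (N.subgroupOf K).FG := by
  rw [← Group.fg_iff_subgroup_fg] at hN ⊢
  exact Group.fg_of_surjective (f := (Subgroup.subgroupOfEquivOfLe hle).symm.toMonoidHom)
    (Subgroup.subgroupOfEquivOfLe hle).symm.surjective

theorem MonoidHom.ker_subgroupComap (f : G →* H) (K : Subgroup H) :
    (f.subgroupComap K).ker = f.ker.subgroupOf (K.comap f) := by
  ext x
  rw [MonoidHom.mem_ker, Subgroup.mem_subgroupOf, MonoidHom.mem_ker, ← Subtype.val_inj]
  rfl

theorem Group.IsFinitelyPresented.of_surjective_of_fg_ker [Group.IsFinitelyPresented G]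
    (f : G →* H) (hf : Function.Surjective f) (hker : f.ker.FG) :
    Group.IsFinitelyPresented H :=
  have : Group.FG f.ker := (Group.fg_iff_subgroup_fg _).2 hker
  of_surjective f hf (.of_FG _)

end

/-- Extension inheritance for coherence, part (ii), case (n,m) = (1,2):
if `p : G → Q` is a surjective group homomorphism with finitely generated kernel `N`
and every finitely generated subgroup of `G` is finitely presented, then every finitely
generated subgroup of `Q` is finitely presented. -/
theorem coherent_of_quotient_of_group_extension {G Q : Type*} [Group G] [Group Q]
    (p : G →* Q) (hp : Function.Surjective p) (N : Subgroup G) (hN : N = p.ker)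
    (hG : ∀ H : Subgroup G, H.FG → Group.FinitelyPresented H)
    (hNfg : N.FG) :
    ∀ K : Subgroup Q, K.FG → Group.FinitelyPresented K := by
  intro K hK
  subst hN
  have hfp : Group.IsFinitelyPresented (K.comap p) :=
    Group.finitelyPresented_iff_isFinitelyPresented.1 (hG _ (hK.comap_of_surjective hp hNfg))
  have hker : (p.subgroupComap K).ker.FG := by
    rw [MonoidHom.ker_subgroupComap]
    exact hNfg.subgroupOf_of_le (p.ker_le_comap K)
  exact Group.finitelyPresented_iff_isFinitelyPresented.2
    (.of_surjective_of_fg_ker _ (p.subgroupComap_surjective_of_surjective K hp) hker)
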